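/- Let φ be a flat ADT formula in negation normal form with size constraints over a well-defined ADT, and let φ̃ be its reduct obtained by the reduction rules extended with the size rule (7) and the modified constructor constraint CtorSpec′_f. If φ̃ is unsatisfiable over EUF+LIA, then φ is unsatisfiable over the ADT with size. -/

import Mathlib

/-!
Reduction of ADT constraints **with size constraints** to EUF+LIA:
soundness for unsatisfiability (Lemma 1 of the paper).
-/

structure ADTSig where
  numSorts : ℕ
  numCtors : ℕ
  ctorArgs : Fin numCtors → List (Fin numSorts)
  ctorRes : Fin numCtors → Fin numSorts

namespace ADTSig

inductive Term (S : ADTSig) : Fin S.numSorts → Type where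
  | mk (f : Fin S.numCtors)
      (args : (i : Fin (S.ctorArgs f).length) → Term S ((S.ctorArgs f).get i)) :
      Term S (S.ctorRes f)

/-- The size `|t|` of a constructor term: the number of constructor
occurrences. -/
def Term.size {S : ADTSig} : {σ : Fin S.numSorts} → Term S σ → ℕ
  | _, .mk _ args => 1 + ∑ i, (args i).size

def Term.head {S : ADTSig} : {σ : Fin S.numSorts} → Term S σ → Fin S.numCtors
  | _, .mk f _ => f

def WellDefined (S : ADTSig) : Prop := ∀ σ, Nonempty (S.Term σ)

structure SelInterp (S : ADTSig) where
  sel : (f : Fin S.numCtors) → (i : Fin (S.ctorArgs f).length) →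
    S.Term (S.ctorRes f) → S.Term ((S.ctorArgs f).get i)
  sel_mk : ∀ f i args, sel f i (Term.mk f args) = args i

/-! ### Presburger formulas (for the size constraints) -/

inductive PTerm (n : ℕ) where
  | cst (c : ℤ)
  | var (i : Fin n)
  | add (s t : PTerm n)
  | smul (c : ℤ) (t : PTerm n)

def PTerm.eval {n : ℕ} (ρ : Fin n → ℤ) : PTerm n → ℤ
  | .cst c => c
  | .var i => ρ i
  | .add s t => s.eval ρ + t.eval ρ
  | .smul c t => c * t.eval ρ

inductive PForm : ℕ → Type where
  | le {n} (s t : PTerm n) : PForm n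
  | peq {n} (s t : PTerm n) : PForm n
  | not {n} (φ : PForm n) : PForm n
  | and {n} (φ ψ : PForm n) : PForm n
  | or {n} (φ ψ : PForm n) : PForm n
  | ex {n} (φ : PForm (n + 1)) : PForm n

def PForm.eval : {n : ℕ} → (Fin n → ℤ) → PForm n → Prop
  | _, ρ, .le s t => s.eval ρ ≤ t.eval ρ
  | _, ρ, .peq s t => s.eval ρ = t.eval ρ
  | _, ρ, .not φ => ¬ φ.eval ρ
  | _, ρ, .and φ ψ => φ.eval ρ ∧ ψ.eval ρ
  | _, ρ, .or φ ψ => φ.eval ρ ∨ ψ.eval ρ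
  | _, ρ, .ex φ => ∃ z : ℤ, φ.eval (Fin.cons z ρ)

/-! ### Flat formulas with size constraints -/

/-- Literals of flat ADT formulas with size constraints: as in the size-free
case, plus Presburger constraints `φ_Pres(|x₁|,…,|x_n|)` on the sizes of
(the terms assigned to) variables. -/
inductive Lit (S : ADTSig) (V : Fin S.numSorts → Type) where
  | ctorEq (f : Fin S.numCtors)
      (xs : (i : Fin (S.ctorArgs f).length) → V ((S.ctorArgs f).get i))
      (x0 : V (S.ctorRes f))
  | selEq (f : Fin S.numCtors) (j : Fin (S.ctorArgs f).length)
      (x : V (S.ctorRes f)) (y : V ((S.ctorArgs f).get j))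
  | tst (f : Fin S.numCtors) (x : V (S.ctorRes f))
  | ntst (f : Fin S.numCtors) (x : V (S.ctorRes f))
  | eqv {σ : Fin S.numSorts} (x y : V σ)
  | nev {σ : Fin S.numSorts} (x y : V σ)
  | sizeC {n : ℕ} (xs : Fin n → Σ σ, V σ) (P : PForm n)

inductive Formula (S : ADTSig) (V : Fin S.numSorts → Type) where
  | fls
  | lit (l : Lit S V)
  | and (φ ψ : Formula S V)
  | or (φ ψ : Formula S V)

variable {S : ADTSig} {V : Fin S.numSorts → Type}

def Lit.holds (I : SelInterp S) (β : (σ : Fin S.numSorts) → V σ → S.Term σ) :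
    Lit S V → Prop
  | .ctorEq f xs x0 => Term.mk f (fun i => β _ (xs i)) = β _ x0
  | .selEq f j x y => I.sel f j (β _ x) = β _ y
  | .tst f x => (β _ x).head = f
  | .ntst f x => (β _ x).head ≠ f
  | .eqv x y => β _ x = β _ y
  | .nev x y => β _ x ≠ β _ y
  | .sizeC xs P => P.eval (fun i => ((β (xs i).1 (xs i).2).size : ℤ))

def Formula.holds (I : SelInterp S) (β : (σ : Fin S.numSorts) → V σ → S.Term σ) :
    Formula S V → Prop
  | .fls => False
  | .lit l => l.holds I β
  | .and φ ψ => φ.holds I β ∧ ψ.holds I β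
  | .or φ ψ => φ.holds I β ∨ ψ.holds I β

def Formula.ADTSat (φ : Formula S V) : Prop :=
  ∃ (I : SelInterp S) (β : (σ : Fin S.numSorts) → V σ → S.Term σ), φ.holds I β

/-! ### The EUF+LIA side, with size functions -/

/-- An EUF+LIA model for the vocabulary of the reduction with size: `size_σ`
replaces `depth_σ`. -/
structure RModel (S : ADTSig) where
  ctorF : (f : Fin S.numCtors) → (Fin (S.ctorArgs f).length → ℤ) → ℤ
  selF : (f : Fin S.numCtors) → Fin (S.ctorArgs f).length → ℤ → ℤ
  ctorIdF : Fin S.numSorts → ℤ → ℤ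
  sizeF : Fin S.numSorts → ℤ → ℤ

def ctorIdxZ (S : ADTSig) (f : Fin S.numCtors) : ℤ :=
  ((Finset.univ.filter
      (fun g : Fin S.numCtors => g ≤ f ∧ S.ctorRes g = S.ctorRes f)).card : ℤ)

def InSort (S : ADTSig) (σ : Fin S.numSorts) (x : ℤ) : Prop :=
  Finite (S.Term σ) → (0 ≤ x ∧ x < (Nat.card (S.Term σ) : ℤ))

/-- The size image `𝕊_σ` of a sort, as a set of integers. -/
def SizeImageZ (S : ADTSig) (σ : Fin S.numSorts) : Set ℤ :=
  {z | ∃ t : S.Term σ, (t.size : ℤ) = z}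

/-- `CtorSpec′_f(x₀,…,x_n)` of Table II. -/
def CtorSpec' (M : RModel S) (f : Fin S.numCtors) (x0 : ℤ)
    (xs : Fin (S.ctorArgs f).length → ℤ) : Prop :=
  M.ctorF f xs = x0 ∧
  M.ctorIdF (S.ctorRes f) x0 = ctorIdxZ S f ∧
  (∀ j, M.selF f j x0 = xs j ∧
     M.sizeF ((S.ctorArgs f).get j) (xs j) ∈ SizeImageZ S ((S.ctorArgs f).get j)) ∧
  M.sizeF (S.ctorRes f) x0 = 1 + ∑ j, M.sizeF ((S.ctorArgs f).get j) (xs j)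

def ExCtorSpec' (M : RModel S) (f : Fin S.numCtors) (x : ℤ) : Prop :=
  ∃ xs : Fin (S.ctorArgs f).length → ℤ,
    (∀ j, InSort S ((S.ctorArgs f).get j) (xs j)) ∧ CtorSpec' M f x xs

/-- The reduct of a literal: rules (1)–(6) with `CtorSpec′`, and rule (7) for
size literals (`|x| ≈ y` becomes `size_σ(x̃) ≈ y ∧ y ∈ 𝕊_σ`). -/
def Lit.redHolds (M : RModel S) (β : (σ : Fin S.numSorts) → V σ → ℤ) :
    Lit S V → Prop
  | .ctorEq f xs x0 => CtorSpec' M f (β _ x0) (fun i => β _ (xs i))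
  | .selEq f j x y => M.selF f j (β _ x) = β _ y ∧
      ∃ g, S.ctorRes g = S.ctorRes f ∧ ExCtorSpec' M g (β _ x)
  | .tst f x => ExCtorSpec' M f (β _ x)
  | .ntst f x => ∃ g, S.ctorRes g = S.ctorRes f ∧ g ≠ f ∧ ExCtorSpec' M g (β _ x)
  | .eqv x y => β _ x = β _ y
  | .nev x y => β _ x ≠ β _ y
  | .sizeC xs P =>
      P.eval (fun i => M.sizeF (xs i).1 (β (xs i).1 (xs i).2)) ∧
      ∀ i, M.sizeF (xs i).1 (β (xs i).1 (xs i).2) ∈ SizeImageZ S (xs i).1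

def Formula.redHolds (M : RModel S) (β : (σ : Fin S.numSorts) → V σ → ℤ) :
    Formula S V → Prop
  | .fls => False
  | .lit l => l.redHolds M β
  | .and φ ψ => φ.redHolds M β ∧ ψ.redHolds M β
  | .or φ ψ => φ.redHolds M β ∨ ψ.redHolds M β

def Formula.RedSat (φ : Formula S V) : Prop :=
  ∃ (M : RModel S) (β : (σ : Fin S.numSorts) → V σ → ℤ),
    φ.redHolds M β ∧ ∀ σ (x : V σ), InSort S σ (β σ x)

end ADTSig

/-!
Given an ADT model of `φ`, code constructor terms injectively by integers, the codes of a
finite sort filling `[0, |𝕋_σ|)` as the range constraints demand, and interpret every symbol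
of the reduct on codes by its ADT counterpart (`size_σ` by `|·|`, `ctorId_σ` by the index of
the head constructor). The size of a code is then the size of a term, so it lies in `𝕊_σ` and
obeys the sum equation of `CtorSpec′` by the definition of `|t|`; each literal of `φ` thus
becomes a true literal of `φ̃`, disequalities surviving by injectivity of the coding.
-/

open Classical in
noncomputable def intCode (α : Type*) [Countable α] : α → ℤ :=
  if _ : Finite α then fun a => (Finite.equivFin α a : ℤ)
  else letI := Encodable.ofCountable α; fun a => (Encodable.encode a : ℤ)

theorem intCode_injective (α : Type*) [Countable α] : Function.Injective (intCode α) := by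
  unfold intCode
  split_ifs
  · exact (Nat.cast_injective.comp Fin.val_injective).comp (Finite.equivFin α).injective
  · let := Encodable.ofCountable α
    exact Nat.cast_injective.comp Encodable.encode_injective

theorem intCode_nonneg_and_lt_card {α : Type*} [Countable α] [Finite α] (a : α) :
    0 ≤ intCode α a ∧ intCode α a < Nat.card α := by
  rw [intCode, dif_pos ‹Finite α›]
  exact ⟨Int.natCast_nonneg _, by exact_mod_cast (Finite.equivFin α a).isLt⟩

namespace ADTSig

variable {S : ADTSig}

def Term.encode : {σ : Fin S.numSorts} → S.Term σ → ℕ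
  | _, .mk f args => Nat.pair f (Encodable.encode (List.ofFn fun i => (args i).encode))

theorem Term.heq_of_encode_eq {σ : Fin S.numSorts} (t : S.Term σ) :
    ∀ {τ : Fin S.numSorts} (t' : S.Term τ), t.encode = t'.encode → σ = τ ∧ HEq t t' := by
  induction t with
  | mk f args ih =>
    rintro _ ⟨g, args'⟩ h
    rw [Term.encode, Term.encode, Nat.pair_eq_pair] at h
    obtain rfl : f = g := Fin.val_injective h.1
    have hargs := List.ofFn_inj.mp (Encodable.encode_injective h.2)
    obtain rfl : args = args' := funext fun i => eq_of_heq (ih i _ (congrFun hargs i)).2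
    exact ⟨rfl, .rfl⟩

theorem Term.encode_injective {σ : Fin S.numSorts} :
    Function.Injective (Term.encode (S := S) (σ := σ)) :=
  fun t t' h => eq_of_heq (Term.heq_of_encode_eq t t' h).2

instance (σ : Fin S.numSorts) : Countable (S.Term σ) :=
  Term.encode_injective.countable

theorem intCode_inSort (σ : Fin S.numSorts) (t : S.Term σ) : InSort S σ (intCode _ t) :=
  fun _ => intCode_nonneg_and_lt_card t

noncomputable def termModel (I : SelInterp S) : RModel S where
  ctorF f := Function.extend (Pi.map fun i => intCode (S.Term ((S.ctorArgs f).get i)))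
    (fun args => intCode _ (Term.mk f args)) 0
  selF f j := Function.extend (intCode _) (fun t => intCode _ (I.sel f j t)) 0
  ctorIdF σ := Function.extend (intCode (S.Term σ)) (fun t => ctorIdxZ S t.head) 0
  sizeF σ := Function.extend (intCode (S.Term σ)) (fun t => (t.size : ℤ)) 0

section termModel

variable (I : SelInterp S)

@[simp]
theorem termModel_ctorF (f : Fin S.numCtors)
    (args : (i : Fin (S.ctorArgs f).length) → S.Term ((S.ctorArgs f).get i)) :
    (termModel I).ctorF f (fun i => intCode _ (args i)) = intCode _ (Term.mk f args) :=
  (Function.Injective.piMap fun _ => intCode_injective _).extend_apply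
    (fun args => intCode _ (Term.mk f args)) 0 args

@[simp]
theorem termModel_selF (f : Fin S.numCtors) (j : Fin (S.ctorArgs f).length)
    (t : S.Term (S.ctorRes f)) :
    (termModel I).selF f j (intCode _ t) = intCode _ (I.sel f j t) :=
  (intCode_injective _).extend_apply (fun t => intCode _ (I.sel f j t)) 0 t

@[simp]
theorem termModel_ctorIdF {σ : Fin S.numSorts} (t : S.Term σ) :
    (termModel I).ctorIdF σ (intCode _ t) = ctorIdxZ S t.head :=
  (intCode_injective _).extend_apply (fun t : S.Term σ => ctorIdxZ S t.head) 0 t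

@[simp]
theorem termModel_sizeF {σ : Fin S.numSorts} (t : S.Term σ) :
    (termModel I).sizeF σ (intCode _ t) = t.size :=
  (intCode_injective _).extend_apply (fun t : S.Term σ => (t.size : ℤ)) 0 t

theorem termModel_ctorSpec' (f : Fin S.numCtors)
    (args : (i : Fin (S.ctorArgs f).length) → S.Term ((S.ctorArgs f).get i)) :
    CtorSpec' (termModel I) f (intCode _ (Term.mk f args)) (fun i => intCode _ (args i)) := by
  refine ⟨termModel_ctorF I f args, termModel_ctorIdF I _, fun j => ?_, ?_⟩
  · exact ⟨by rw [termModel_selF, I.sel_mk], args j, (termModel_sizeF I _).symm⟩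
  · simp only [termModel_sizeF, Term.size]
    push_cast
    rfl

theorem termModel_exCtorSpec'_head {σ : Fin S.numSorts} (t : S.Term σ) :
    S.ctorRes t.head = σ ∧ ExCtorSpec' (termModel I) t.head (intCode _ t) := by
  obtain ⟨f, args⟩ := t
  exact ⟨rfl, _, fun j => intCode_inSort _ (args j), termModel_ctorSpec' I f args⟩

variable {V : Fin S.numSorts → Type} (β : (σ : Fin S.numSorts) → V σ → S.Term σ)

theorem Lit.redHolds_termModel {l : Lit S V} (h : l.holds I β) :
    l.redHolds (termModel I) (fun σ x => intCode _ (β σ x)) := by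
  cases l <;> simp only [Lit.holds, Lit.redHolds] at h ⊢
  case ctorEq f xs x0 => simpa only [← h] using termModel_ctorSpec' I f fun i => β _ (xs i)
  case selEq f j x y =>
    obtain ⟨hres, hspec⟩ := termModel_exCtorSpec'_head I (β _ x)
    exact ⟨(termModel_selF I f j _).trans (congrArg _ h), _, hres, hspec⟩
  case tst f x => simpa only [← h] using (termModel_exCtorSpec'_head I (β _ x)).2
  case ntst f x =>
    obtain ⟨hres, hspec⟩ := termModel_exCtorSpec'_head I (β _ x)
    exact ⟨_, hres, h, hspec⟩
  case eqv x y => exact congrArg _ h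
  case nev x y => exact (intCode_injective _).ne h
  case sizeC xs P =>
    exact ⟨by simpa only [termModel_sizeF] using h, fun i => ⟨_, (termModel_sizeF I _).symm⟩⟩

theorem Formula.redHolds_termModel {φ : Formula S V} (h : φ.holds I β) :
    φ.redHolds (termModel I) (fun σ x => intCode _ (β σ x)) := by
  induction φ with
  | fls => exact h
  | lit l => exact Lit.redHolds_termModel I β h
  | and φ ψ ihφ ihψ => exact ⟨ihφ h.1, ihψ h.2⟩
  | or φ ψ ihφ ihψ => exact h.imp ihφ ihψ

end termModel

end ADTSig

open ADTSig in
theorem size_reduction_sound_general (S : ADTSig)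
    (V : Fin S.numSorts → Type) (φ : Formula S V)
    (hunsat : ¬ φ.RedSat) : ¬ φ.ADTSat := by
  rintro ⟨I, β, hφ⟩
  exact hunsat ⟨termModel I, _, Formula.redHolds_termModel I β hφ,
    fun σ x => intCode_inSort σ (β σ x)⟩

open ADTSig in
/-- **Lemma 1.** If the reduct `φ̃` of a flat ADT formula `φ` in NNF with size
constraints is unsatisfiable over EUF+LIA, then `φ` is unsatisfiable over the
ADT with size. -/
theorem size_reduction_sound (S : ADTSig) (hS : S.WellDefined)
    (V : Fin S.numSorts → Type) (φ : Formula S V)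
    (hunsat : ¬ φ.RedSat) : ¬ φ.ADTSat :=
  size_reduction_sound_general S V φ hunsat
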